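/- arXiv:2508.03662 — 10 statements merged into one kernel-verified Lean document; each statement's English description precedes it below -/
import Mathlib

section
/- Let Γ be a finite simple graph that is transvection-free and contains no square (no induced 4-cycle, i.e., no cycle v₁v₂v₃v₄ with v₁ not adjacent to v₃ and v₂ not adjacent to v₄). Then every connected component of Γ is strongly reduced: no connected component Γ₀ contains a proper collapsible full subgraph on at least two vertices. -/
namespace SimpleGraph

variable {V : Type*}

/-- The star of a vertex: the vertex together with its link (set of neighbors). -/
def vstar (G : SimpleGraph V) (v : V) : Set V := insert v (G.neighborSet v)

/-- A graph is transvection-free if there are no distinct vertices `v, v'` with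
`lk(v) ⊆ st(v')`. -/
def TransvectionFree (G : SimpleGraph V) : Prop :=
  ∀ v v' : V, v ≠ v' → ¬ G.neighborSet v ⊆ G.vstar v'

/-- A graph contains a square if it has a cycle `v₁ v₂ v₃ v₄` with `v₁` not adjacent to `v₃`
and `v₂` not adjacent to `v₄`. -/
def HasSquare (G : SimpleGraph V) : Prop :=
  ∃ v₁ v₂ v₃ v₄ : V, v₁ ≠ v₃ ∧ v₂ ≠ v₄ ∧ G.Adj v₁ v₂ ∧ G.Adj v₂ v₃ ∧ G.Adj v₃ v₄ ∧
    G.Adj v₄ v₁ ∧ ¬ G.Adj v₁ v₃ ∧ ¬ G.Adj v₂ v₄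

/-- `Λ^⊥`: the set of vertices outside `Λ` adjacent to every vertex of `Λ`. -/
def perp (G : SimpleGraph V) (Λ : Set V) : Set V :=
  {w | w ∉ Λ ∧ ∀ u ∈ Λ, G.Adj w u}

/-- A full subgraph `Λ` is collapsible if `st(v) ∩ (Γ \ Λ) = Λ^⊥` for every `v ∈ Λ`. -/
def IsCollapsible (G : SimpleGraph V) (Λ : Set V) : Prop :=
  ∀ v ∈ Λ, {w | w ∉ Λ ∧ G.Adj v w} = G.perp Λ

/-- `Λ^⊥` computed inside the full subgraph spanned by `S`. -/
def perpIn (G : SimpleGraph V) (S Λ : Set V) : Set V :=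
  {w ∈ S | w ∉ Λ ∧ ∀ u ∈ Λ, G.Adj w u}

/-- `Λ` is a collapsible full subgraph of the full subgraph spanned by `S`. -/
def IsCollapsibleIn (G : SimpleGraph V) (S Λ : Set V) : Prop :=
  Λ ⊆ S ∧ ∀ v ∈ Λ, {w ∈ S | w ∉ Λ ∧ G.Adj v w} = G.perpIn S Λ

/-- The full subgraph spanned by `S` is strongly reduced: it has no proper collapsible
full subgraph on at least two vertices. -/
def StronglyReducedOn (G : SimpleGraph V) (S : Set V) : Prop :=
  ∀ Λ : Set V, G.IsCollapsibleIn S Λ → 2 ≤ Λ.ncard → Λ = S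

/-- A graph is strongly reduced: no proper collapsible full subgraph on ≥ 2 vertices. -/
def StronglyReduced (G : SimpleGraph V) : Prop :=
  ∀ Λ : Set V, G.IsCollapsible Λ → 2 ≤ Λ.ncard → Λ = Set.univ

/-- A graph is clique-reduced if it has no collapsible complete full subgraph on at least
two vertices. -/
def CliqueReduced (G : SimpleGraph V) : Prop :=
  ∀ Λ : Set V, G.IsCollapsible Λ → Λ.Pairwise G.Adj → Λ.ncard ≤ 1

/-- The domination preorder: `v ≤ v'` iff `lk(v) ⊆ st(v')`. -/
def dle (G : SimpleGraph V) (v v' : V) : Prop := G.neighborSet v ⊆ G.vstar v'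

/-- The equivalence relation induced by the domination preorder. -/
def sim (G : SimpleGraph V) (v v' : V) : Prop := G.dle v v' ∧ G.dle v' v

/-- The `∼`-equivalence class of a vertex. -/
def simClass (G : SimpleGraph V) (v : V) : Set V := {v' | G.sim v v'}

/-- For a set `S` of vertices, the set of vertices adjacent to every vertex of `S`. -/
def perpSet (G : SimpleGraph V) (S : Set V) : Set V := {w | ∀ u ∈ S, G.Adj w u}

/-- A set of vertices spans a join full subgraph: it can be partitioned into two nonempty
sets with every vertex of the first adjacent to every vertex of the second. -/
def IsJoinSet (G : SimpleGraph V) (S : Set V) : Prop :=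
  ∃ S₁ S₂ : Set V, S₁.Nonempty ∧ S₂.Nonempty ∧ Disjoint S₁ S₂ ∧ S₁ ∪ S₂ = S ∧
    ∀ a ∈ S₁, ∀ b ∈ S₂, G.Adj a b

/-- A maximal join full subgraph. -/
def IsMaxJoinSet (G : SimpleGraph V) (S : Set V) : Prop :=
  G.IsJoinSet S ∧ ∀ T : Set V, G.IsJoinSet T → S ⊆ T → T = S

/-- The maximal clique factor of the full subgraph spanned by `S`: the vertices of `S`
adjacent to all other vertices of `S`. -/
def cliqueFactorIn (G : SimpleGraph V) (S : Set V) : Set V :=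
  {v ∈ S | ∀ w ∈ S, w ≠ v → G.Adj v w}

/-- The full subgraph spanned by `S` is irreducible: it is not a join. -/
def IrreducibleSet (G : SimpleGraph V) (S : Set V) : Prop := ¬ G.IsJoinSet S

end SimpleGraph

/-!
If `Λ` is collapsible, every vertex outside `Λ` adjacent to some vertex of `Λ` lies in `Λ^⊥`.
Given two vertices `a ≠ b` of `Λ` and some `w ∈ Λ^⊥`, transvection-freeness applied to `(a, b)`
yields a neighbour `u` of `a` off `st(b)`, which is forced into `Λ`; applied to `(a, w)` it yields a
neighbour `x` of `a` off `st(w)`, which is forced into `Λ^⊥`. Then `u w b x` is a square. In a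
connected component, a proper collapsible `Λ` always has a boundary edge, hence `Λ^⊥ ≠ ∅`.
-/

namespace SimpleGraph

variable {V : Type*} {G : SimpleGraph V} {Λ : Set V}

theorem IsCollapsible.mem_perp (hΛ : G.IsCollapsible Λ) {a b : V} (ha : a ∈ Λ) (hb : b ∉ Λ)
    (hab : G.Adj a b) : b ∈ G.perp Λ := by
  rw [← hΛ a ha]
  exact ⟨hb, hab⟩

theorem IsCollapsible.hasSquare (htf : G.TransvectionFree) (hΛ : G.IsCollapsible Λ)
    {a b w : V} (ha : a ∈ Λ) (hb : b ∈ Λ) (hab : a ≠ b) (hw : w ∈ G.perp Λ) :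
    G.HasSquare := by
  obtain ⟨hwΛ, hwadj⟩ := hw
  obtain ⟨u, hau, hub⟩ := Set.not_subset.mp (htf a b hab)
  have huΛ : u ∈ Λ := by
    by_contra huΛ
    exact hub (Or.inr ((hΛ.mem_perp ha huΛ hau).2 b hb).symm)
  obtain ⟨x, hax, hxw⟩ := Set.not_subset.mp (htf a w fun h => hwΛ (h ▸ ha))
  have hxΛ : x ∉ Λ := fun hxΛ => hxw (Or.inr (hwadj x hxΛ))
  have hxadj : ∀ v ∈ Λ, G.Adj x v := (hΛ.mem_perp ha hxΛ hax).2
  exact ⟨u, w, b, x, fun h => hub (Or.inl h), fun h => hxw (Or.inl h.symm),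
    (hwadj u huΛ).symm, hwadj b hb, (hxadj b hb).symm, hxadj u huΛ,
    fun h => hub (Or.inr h.symm), fun h => hxw (Or.inr h)⟩

namespace ConnectedComponent

variable {c : G.ConnectedComponent}

theorem isCollapsible_of_isCollapsibleIn_supp (hΛ : G.IsCollapsibleIn c.supp Λ) :
    G.IsCollapsible Λ := by
  intro v hv
  have hvc : v ∈ c.supp := hΛ.1 hv
  ext w
  have hcol := Set.ext_iff.mp (hΛ.2 v hv) w
  constructor
  · rintro ⟨hwΛ, hvw⟩
    exact (hcol.mp ⟨(c.mem_supp_congr_adj hvw).mp hvc, hwΛ, hvw⟩).2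
  · rintro ⟨hwΛ, hwadj⟩
    exact ⟨hwΛ, (hwadj v hv).symm⟩

theorem exists_mem_perp_of_ssubset_supp (hΛ : G.IsCollapsible Λ) (hΛc : Λ ⊆ c.supp)
    {a s : V} (ha : a ∈ Λ) (hs : s ∈ c.supp) (hsΛ : s ∉ Λ) : ∃ w, w ∈ G.perp Λ := by
  obtain ⟨p⟩ := c.reachable_of_mem_supp (hΛc ha) hs
  obtain ⟨d, -, hd₁, hd₂⟩ := p.exists_boundary_dart Λ ha hsΛ
  exact ⟨d.snd, hΛ.mem_perp hd₁ hd₂ d.adj⟩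

end ConnectedComponent

end SimpleGraph

open SimpleGraph in
theorem stmt_1_general {V : Type*} (G : SimpleGraph V)
    (htf : G.TransvectionFree) (hsq : ¬ G.HasSquare) :
    ∀ c : G.ConnectedComponent, G.StronglyReducedOn c.supp := by
  intro c Λ hΛ hcard
  have hcoll := ConnectedComponent.isCollapsible_of_isCollapsibleIn_supp hΛ
  obtain ⟨a, ha, b, hb, hab⟩ := (Set.one_lt_ncard_iff_nontrivial_and_finite.mp hcard).1
  refine hΛ.1.antisymm fun s hs => ?_
  by_contra hsΛ
  obtain ⟨w, hw⟩ := ConnectedComponent.exists_mem_perp_of_ssubset_supp hcoll hΛ.1 ha hs hsΛ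
  exact hsq (hcoll.hasSquare htf ha hb hab hw)

open SimpleGraph in
theorem stmt_1 {V : Type*} [Fintype V] (G : SimpleGraph V)
    (htf : G.TransvectionFree) (hsq : ¬ G.HasSquare) :
    ∀ c : G.ConnectedComponent, G.StronglyReducedOn c.supp :=
  stmt_1_general G htf hsq
end

section
/- Let Λ be a finite simple graph such that every connected component of Λ is strongly reduced. If Δ ⊆ Λ is a collapsible full subgraph with at least 2 vertices, then Δ is a union of connected components of Λ. -/
/-!
If `Δ^⊥` contains a vertex `w`, every vertex of `Δ` is adjacent to `w`, so `Δ` lies in the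
component of `w`; collapsibility passes to that component, which is strongly reduced, so `Δ` is the
whole component. If `Δ^⊥ = ∅`, collapsibility says that no vertex of `Δ` has a neighbour outside
`Δ`, so `Δ` is closed under reachability and hence a union of components.
-/

namespace SimpleGraph

variable {V : Type*} {G : SimpleGraph V}

theorem mem_of_reachable_of_adj_closed {s : Set V} (hs : ∀ ⦃u v⦄, u ∈ s → G.Adj u v → v ∈ s)
    {u v : V} (huv : G.Reachable u v) (hu : u ∈ s) : v ∈ s := by
  obtain ⟨p⟩ := huv
  induction p with
  | nil => exact hu
  | cons hadj _ ih => exact ih (hs hu hadj)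

theorem eq_biUnion_supp_of_adj_closed {s : Set V} (hs : ∀ ⦃u v⦄, u ∈ s → G.Adj u v → v ∈ s) :
    s = ⋃ c ∈ G.connectedComponentMk '' s, c.supp := by
  ext w
  simp only [Set.mem_iUnion, Set.mem_image, ConnectedComponent.mem_supp_iff, exists_prop,
    exists_exists_and_eq_and]
  exact ⟨fun hw => ⟨w, hw, rfl⟩, fun ⟨u, hu, huw⟩ =>
    mem_of_reachable_of_adj_closed hs (ConnectedComponent.exact huw.symm) hu⟩

theorem subset_supp_of_mem_perp {Δ : Set V} {w : V} (hw : w ∈ G.perp Δ) :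
    Δ ⊆ (G.connectedComponentMk w).supp :=
  fun u hu => ConnectedComponent.sound (hw.2 u hu).reachable.symm

namespace IsCollapsible

variable {Δ : Set V}

theorem isCollapsibleIn {S : Set V} (hcol : G.IsCollapsible Δ) (hS : Δ ⊆ S) :
    G.IsCollapsibleIn S Δ :=
  ⟨hS, fun v hv => Set.ext fun w => and_congr_right fun _ => Set.ext_iff.mp (hcol v hv) w⟩

theorem mem_of_adj (hcol : G.IsCollapsible Δ) (hperp : G.perp Δ = ∅) {u v : V} (hu : u ∈ Δ)
    (huv : G.Adj u v) : v ∈ Δ := by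
  by_contra hv
  have hv_perp : v ∈ G.perp Δ := hcol u hu ▸ ⟨hv, huv⟩
  simp [hperp] at hv_perp

end IsCollapsible

end SimpleGraph

open SimpleGraph in
theorem stmt_2_general {V : Type*} (G : SimpleGraph V)
    (hcomp : ∀ c : G.ConnectedComponent, G.StronglyReducedOn c.supp)
    (Δ : Set V) (hcol : G.IsCollapsible Δ) (hcard : 2 ≤ Δ.ncard) :
    ∃ 𝒞 : Set G.ConnectedComponent, Δ = ⋃ c ∈ 𝒞, c.supp := by
  rcases (G.perp Δ).eq_empty_or_nonempty with hperp | ⟨w, hw⟩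
  · exact ⟨_, eq_biUnion_supp_of_adj_closed fun _ _ hu huv => hcol.mem_of_adj hperp hu huv⟩
  · refine ⟨{G.connectedComponentMk w}, ?_⟩
    rw [Set.biUnion_singleton]
    exact hcomp _ Δ (hcol.isCollapsibleIn (subset_supp_of_mem_perp hw)) hcard

open SimpleGraph in
theorem stmt_2 {V : Type*} [Fintype V] (G : SimpleGraph V)
    (hcomp : ∀ c : G.ConnectedComponent, G.StronglyReducedOn c.supp)
    (Δ : Set V) (hcol : G.IsCollapsible Δ) (hcard : 2 ≤ Δ.ncard) :
    ∃ 𝒞 : Set G.ConnectedComponent, Δ = ⋃ c ∈ 𝒞, c.supp :=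
  stmt_2_general G hcomp Δ hcol hcard
end

section
/- Let Γ, Λ be clique-reduced finite simple graphs. Suppose α maps each vertex of Γ to a nonempty set of vertices of Λ and β maps each vertex of Λ to a nonempty set of vertices of Γ, such that: (1) if distinct v, v' ∈ Γ are adjacent then α(v') ⊆ α(v)^⊥; (2) if distinct w, w' ∈ Λ are adjacent then β(w') ⊆ β(w)^⊥; (3) for all v ∈ Γ and w ∈ Λ, w ∈ α(v) if and only if v ∈ β(w). Then for every v ∈ Γ, the set α([v]) := ∪_{v'∼v} α(v') is a single ∼-equivalence class of vertices of Λ, and similarly for β; moreover the induced maps between the quotient graphs E(Γ) and E(Λ) are graph isomorphisms inverse to each other. -/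
/-!
Condition (3) makes adjacency transfer in both directions: if `w ∈ α v` and `w' ∈ α v'`, then
`v` and `v'` are adjacent iff `w` and `w'` are, by (1) in one direction and (2) in the other.
In a clique-reduced graph `∼`-equivalent vertices are never adjacent (an adjacent pair would be a
collapsible edge), so `∼` is a congruence for adjacency. Given `v ∼ v'`, `w ∈ α v`, `w' ∈ α v'` and
a neighbour `u` of `w`, pick `x ∈ β u`; then `x` is adjacent to `v`, hence `x = v'` or `x` is
adjacent to `v'`. The first case would make `v'` adjacent to `v`; in the second `u` is adjacent
to `w'`. So `α` maps `∼`-classes into `∼`-classes, and by symmetry onto them.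
-/

namespace SimpleGraph

variable {V W : Type*} {G : SimpleGraph V} {H : SimpleGraph W}

theorem sim.symm {v v' : V} (h : G.sim v v') : G.sim v' v := ⟨h.2, h.1⟩

theorem sim.adj_iff_of_ne {v v' w : V} (h : G.sim v v') (hwv : w ≠ v) (hwv' : w ≠ v') :
    G.Adj v w ↔ G.Adj v' w :=
  ⟨fun hw => (h.1 hw).resolve_left hwv', fun hw => (h.2 hw).resolve_left hwv⟩

theorem sim.isCollapsible_pair {v v' : V} (h : G.sim v v') (hadj : G.Adj v v') :
    G.IsCollapsible {v, v'} := by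
  intro a ha
  ext w
  simp only [perp, Set.mem_ofPred_eq, Set.mem_insert_iff, Set.mem_singleton_iff, not_or,
    forall_eq_or_imp, forall_eq]
  refine and_congr_right fun ⟨hwv, hwv'⟩ => ?_
  rw [G.adj_comm w v, G.adj_comm w v', ← h.adj_iff_of_ne hwv hwv', and_self]
  rcases ha with rfl | rfl
  · rfl
  · exact (h.adj_iff_of_ne hwv hwv').symm

namespace CliqueReduced

theorem not_adj_of_sim (hG : G.CliqueReduced) {v v' : V} (h : G.sim v v') : ¬ G.Adj v v' := by
  intro hadj
  have hcard := hG _ (h.isCollapsible_pair hadj)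
    (Set.pairwise_pair.2 fun _ => ⟨hadj, hadj.symm⟩)
  rw [Set.ncard_pair hadj.ne] at hcard
  omega

theorem adj_of_sim_of_adj (hG : G.CliqueReduced) {a b c : V} (h : G.sim a b)
    (hac : G.Adj a c) : G.Adj b c := by
  obtain rfl | hcb := eq_or_ne c b
  · exact absurd hac (hG.not_adj_of_sim h)
  · exact (h.adj_iff_of_ne hac.ne' hcb).1 hac

theorem adj_congr (hG : G.CliqueReduced) {a a' b b' : V} (ha : G.sim a a')
    (hb : G.sim b b') : G.Adj a b ↔ G.Adj a' b' := by
  have key : ∀ {a a' b b'}, G.sim a a' → G.sim b b' → G.Adj a b → G.Adj a' b' :=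
    fun ha hb hab => (hG.adj_of_sim_of_adj hb (hG.adj_of_sim_of_adj ha hab).symm).symm
  exact ⟨key ha hb, key ha.symm hb.symm⟩

theorem sim_trans (hG : G.CliqueReduced) {a b c : V} (hab : G.sim a b) (hbc : G.sim b c) :
    G.sim a c :=
  ⟨fun _ hu => Set.mem_insert_of_mem _ (hG.adj_of_sim_of_adj hbc (hG.adj_of_sim_of_adj hab hu)),
    fun _ hu => Set.mem_insert_of_mem _
      (hG.adj_of_sim_of_adj hab.symm (hG.adj_of_sim_of_adj hbc.symm hu))⟩

theorem simClass_eq (hG : G.CliqueReduced) {a b : V} (h : G.sim a b) :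
    G.simClass a = G.simClass b :=
  Set.ext fun _ => ⟨hG.sim_trans h.symm, hG.sim_trans h⟩

end CliqueReduced

theorem mem_iUnion_simClass {α : V → Set W} {v : V} {w : W} :
    w ∈ ⋃ v' ∈ G.simClass v, α v' ↔ ∃ v', G.sim v v' ∧ w ∈ α v' := by
  simp only [Set.mem_iUnion, exists_prop, simClass, Set.mem_ofPred_eq]

/-- Conditions (1)–(3) of the statement. -/
structure FiberCorrespondence (G : SimpleGraph V) (H : SimpleGraph W) (α : V → Set W)
    (β : W → Set V) : Prop where
  mem_iff : ∀ v w, w ∈ α v ↔ v ∈ β w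
  subset_perpSet_left : ∀ v v', G.Adj v v' → α v' ⊆ H.perpSet (α v)
  subset_perpSet_right : ∀ w w', H.Adj w w' → β w' ⊆ G.perpSet (β w)

namespace FiberCorrespondence

variable {α : V → Set W} {β : W → Set V} (hc : FiberCorrespondence G H α β)
include hc

theorem symm : FiberCorrespondence H G β α :=
  ⟨fun w v => (hc.mem_iff v w).symm, hc.subset_perpSet_right, hc.subset_perpSet_left⟩

theorem adj_of_adj {v v' : V} {w w' : W} (hw : w ∈ α v) (hw' : w' ∈ α v')
    (h : G.Adj v v') : H.Adj w w' :=
  (hc.subset_perpSet_left v v' h hw' w hw).symm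

theorem adj_iff {v v' : V} {w w' : W} (hw : w ∈ α v) (hw' : w' ∈ α v') :
    G.Adj v v' ↔ H.Adj w w' :=
  ⟨hc.adj_of_adj hw hw', hc.symm.adj_of_adj ((hc.mem_iff _ _).1 hw) ((hc.mem_iff _ _).1 hw')⟩

theorem dle_of_sim (hG : G.CliqueReduced) (hβ : ∀ w, (β w).Nonempty) {v v' : V} {w w' : W}
    (hs : G.sim v v') (hw : w ∈ α v) (hw' : w' ∈ α v') : H.dle w w' := by
  intro u hwu
  obtain ⟨x, hx⟩ := hβ u
  have hux : u ∈ α x := (hc.mem_iff x u).2 hx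
  have hxv : G.Adj x v := (hc.adj_iff hux hw).2 hwu.symm
  rcases hs.1 hxv.symm with rfl | hxv'
  · exact absurd hxv.symm (hG.not_adj_of_sim hs)
  · exact Set.mem_insert_of_mem _ (hc.adj_of_adj hw' hux hxv')

theorem sim_of_sim (hG : G.CliqueReduced) (hβ : ∀ w, (β w).Nonempty) {v v' : V} {w w' : W}
    (hs : G.sim v v') (hw : w ∈ α v) (hw' : w' ∈ α v') : H.sim w w' :=
  ⟨hc.dle_of_sim hG hβ hs hw hw', hc.dle_of_sim hG hβ hs.symm hw' hw⟩

theorem iUnion_simClass_eq (hG : G.CliqueReduced) (hH : H.CliqueReduced)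
    (hα : ∀ v, (α v).Nonempty) (hβ : ∀ w, (β w).Nonempty) {v : V} {w : W} (hw : w ∈ α v) :
    ⋃ v' ∈ G.simClass v, α v' = H.simClass w := by
  ext w₀
  rw [mem_iUnion_simClass]
  constructor
  · rintro ⟨v₁, hv₁, hw₀⟩
    exact hc.sim_of_sim hG hβ hv₁ hw hw₀
  · intro hw₀
    obtain ⟨x, hx⟩ := hβ w₀
    exact ⟨x, hc.symm.sim_of_sim hH hα hw₀ ((hc.mem_iff v w).1 hw) hx, (hc.mem_iff x w₀).2 hx⟩

theorem exists_iUnion_simClass_eq (hG : G.CliqueReduced) (hH : H.CliqueReduced)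
    (hα : ∀ v, (α v).Nonempty) (hβ : ∀ w, (β w).Nonempty) (v : V) :
    ∃ w, ⋃ v' ∈ G.simClass v, α v' = H.simClass w :=
  (hα v).imp fun _ => hc.iUnion_simClass_eq hG hH hα hβ

theorem iUnion_simClass_eq_of_mem (hG : G.CliqueReduced) (hH : H.CliqueReduced)
    (hα : ∀ v, (α v).Nonempty) (hβ : ∀ w, (β w).Nonempty) {v : V} {w : W}
    (hw : w ∈ ⋃ v' ∈ G.simClass v, α v') :
    ⋃ w' ∈ H.simClass w, β w' = G.simClass v := by
  obtain ⟨v₁, hv₁, hw₁⟩ := mem_iUnion_simClass.1 hw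
  rw [hc.symm.iUnion_simClass_eq hH hG hβ hα ((hc.mem_iff v₁ w).1 hw₁), hG.simClass_eq hv₁.symm]

theorem adj_iff_of_mem_iUnion_simClass (hG : G.CliqueReduced) {v v' : V} {w w' : W}
    (hw : w ∈ ⋃ u ∈ G.simClass v, α u) (hw' : w' ∈ ⋃ u ∈ G.simClass v', α u) :
    G.Adj v v' ↔ H.Adj w w' := by
  obtain ⟨u, hu, hwu⟩ := mem_iUnion_simClass.1 hw
  obtain ⟨u', hu', hwu'⟩ := mem_iUnion_simClass.1 hw'
  exact (hG.adj_congr hu hu').trans (hc.adj_iff hwu hwu')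

end FiberCorrespondence

end SimpleGraph

open SimpleGraph in
theorem stmt_3_general {V W : Type*}
    (G : SimpleGraph V) (H : SimpleGraph W)
    (hG : G.CliqueReduced) (hH : H.CliqueReduced)
    (α : V → Set W) (β : W → Set V)
    (hαne : ∀ v : V, (α v).Nonempty) (hβne : ∀ w : W, (β w).Nonempty)
    (h1 : ∀ v v' : V, v ≠ v' → G.Adj v v' → α v' ⊆ H.perpSet (α v))
    (h2 : ∀ w w' : W, w ≠ w' → H.Adj w w' → β w' ⊆ G.perpSet (β w))
    (h3 : ∀ (v : V) (w : W), w ∈ α v ↔ v ∈ β w) :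
    (∀ v : V, ∃ w : W, (⋃ v' ∈ G.simClass v, α v') = H.simClass w) ∧
    (∀ w : W, ∃ v : V, (⋃ w' ∈ H.simClass w, β w') = G.simClass v) ∧
    (∀ (v : V) (w : W), w ∈ (⋃ v' ∈ G.simClass v, α v') →
        (⋃ w' ∈ H.simClass w, β w') = G.simClass v) ∧
    (∀ (w : W) (v : V), v ∈ (⋃ w' ∈ H.simClass w, β w') →
        (⋃ v' ∈ G.simClass v, α v') = H.simClass w) ∧
    (∀ (v v' : V) (w w' : W), ¬ G.sim v v' →
        w ∈ (⋃ u ∈ G.simClass v, α u) → w' ∈ (⋃ u ∈ G.simClass v', α u) →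
        (G.Adj v v' ↔ H.Adj w w')) := by
  have hc : FiberCorrespondence G H α β :=
    ⟨h3, fun v v' h => h1 v v' h.ne h, fun w w' h => h2 w w' h.ne h⟩
  exact ⟨hc.exists_iUnion_simClass_eq hG hH hαne hβne,
    hc.symm.exists_iUnion_simClass_eq hH hG hβne hαne,
    fun _ _ => hc.iUnion_simClass_eq_of_mem hG hH hαne hβne,
    fun _ _ => hc.symm.iUnion_simClass_eq_of_mem hH hG hβne hαne,
    fun _ _ _ _ _ => hc.adj_iff_of_mem_iUnion_simClass hG⟩

open SimpleGraph in
theorem stmt_3 {V W : Type*} [Fintype V] [Fintype W]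
    (G : SimpleGraph V) (H : SimpleGraph W)
    (hG : G.CliqueReduced) (hH : H.CliqueReduced)
    (α : V → Set W) (β : W → Set V)
    (hαne : ∀ v : V, (α v).Nonempty) (hβne : ∀ w : W, (β w).Nonempty)
    (h1 : ∀ v v' : V, v ≠ v' → G.Adj v v' → α v' ⊆ H.perpSet (α v))
    (h2 : ∀ w w' : W, w ≠ w' → H.Adj w w' → β w' ⊆ G.perpSet (β w))
    (h3 : ∀ (v : V) (w : W), w ∈ α v ↔ v ∈ β w) :
    (∀ v : V, ∃ w : W, (⋃ v' ∈ G.simClass v, α v') = H.simClass w) ∧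
    (∀ w : W, ∃ v : V, (⋃ w' ∈ H.simClass w, β w') = G.simClass v) ∧
    (∀ (v : V) (w : W), w ∈ (⋃ v' ∈ G.simClass v, α v') →
        (⋃ w' ∈ H.simClass w, β w') = G.simClass v) ∧
    (∀ (w : W) (v : V), v ∈ (⋃ w' ∈ H.simClass w, β w') →
        (⋃ v' ∈ G.simClass v, α v') = H.simClass w) ∧
    (∀ (v v' : V) (w w' : W), ¬ G.sim v v' →
        w ∈ (⋃ u ∈ G.simClass v, α u) → w' ∈ (⋃ u ∈ G.simClass v', α u) →
        (G.Adj v v' ↔ H.Adj w w')) :=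
  stmt_3_general G H hG hH α β hαne hβne h1 h2 h3
end

section
/- Let Ω be a finite simple graph which is transvection-free, contains no square, and has at least two vertices. Then for every vertex v ∈ Ω: (a) st(v) is a maximal join full subgraph of Ω; (b) the maximal clique factor of st(v) is {v}; (c) lk(v) is an irreducible graph. Moreover, every maximal join full subgraph of Ω is of the form st(v) for some vertex v. -/
/-! Without squares, a join `T₁ * T₂` has a complete factor (two non-adjacent vertices in each factor
would span a square), so every join full subgraph lies in the star of one of its vertices.
Transvection-freeness says that `lk(v) ⊆ st(w)` forces `v = w`; hence a join containing `st(v)`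
lies in `st(v)`, a vertex adjacent to everything in `st(v)` is `v`, and a join decomposition
of `lk(v)` would put `lk(v)` inside the star of a neighbour of `v`. -/

namespace SimpleGraph

variable {V : Type*} {G : SimpleGraph V}

lemma isClique_of_forall_adj_of_not_hasSquare (hsq : ¬ G.HasSquare) {A B : Set V}
    (hAB : ∀ a ∈ A, ∀ b ∈ B, G.Adj a b) (hA : ¬ G.IsClique A) : G.IsClique B := by
  obtain ⟨x, hx, y, hy, hxy, hnxy⟩ : ∃ x ∈ A, ∃ y ∈ A, x ≠ y ∧ ¬ G.Adj x y := by
    simpa [IsClique, Set.Pairwise] using hA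
  intro p hp q hq hpq
  by_contra hnpq
  exact hsq ⟨x, p, y, q, hxy, hpq, hAB x hx p hp, (hAB y hy p hp).symm, hAB y hy q hq,
    (hAB x hx q hq).symm, hnxy, hnpq⟩

lemma union_subset_vstar_of_isClique {A B : Set V} (hA : G.IsClique A)
    (hAB : ∀ a ∈ A, ∀ b ∈ B, G.Adj a b) {a : V} (ha : a ∈ A) : A ∪ B ⊆ G.vstar a := by
  rintro u (hu | hu)
  · rcases eq_or_ne u a with rfl | hne
    · exact Set.mem_insert _ _
    · exact Set.mem_insert_of_mem _ (hA ha hu hne.symm)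
  · exact Set.mem_insert_of_mem _ (hAB a ha u hu)

lemma IsJoinSet.exists_subset_vstar (hsq : ¬ G.HasSquare) {T : Set V} (hT : G.IsJoinSet T) :
    ∃ w ∈ T, T ⊆ G.vstar w := by
  obtain ⟨T₁, T₂, ⟨a, ha⟩, ⟨b, hb⟩, -, rfl, hadj⟩ := hT
  by_cases h₁ : G.IsClique T₁
  · exact ⟨a, Or.inl ha, union_subset_vstar_of_isClique h₁ hadj ha⟩
  · have h₂ := isClique_of_forall_adj_of_not_hasSquare hsq hadj h₁
    have hadj' : ∀ b ∈ T₂, ∀ a ∈ T₁, G.Adj b a := fun b hb a ha => (hadj a ha b hb).symm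
    refine ⟨b, Or.inr hb, ?_⟩
    rw [Set.union_comm]
    exact union_subset_vstar_of_isClique h₂ hadj' hb

lemma isJoinSet_vstar {v : V} (h : (G.neighborSet v).Nonempty) : G.IsJoinSet (G.vstar v) :=
  ⟨{v}, G.neighborSet v, Set.singleton_nonempty v, h, by simp, Set.singleton_union,
    by rintro a rfl b hb; exact hb⟩

namespace TransvectionFree

lemma eq_of_neighborSet_subset_vstar (htf : G.TransvectionFree) {v w : V}
    (h : G.neighborSet v ⊆ G.vstar w) : v = w :=
  by_contra fun hne => htf v w hne h

lemma neighborSet_nonempty [Nontrivial V] (htf : G.TransvectionFree) (v : V) :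
    (G.neighborSet v).Nonempty := by
  obtain ⟨w, hw⟩ := exists_ne v
  refine Set.nonempty_iff_ne_empty.2 fun h => hw (htf.eq_of_neighborSet_subset_vstar ?_).symm
  simp [h]

lemma isMaxJoinSet_vstar [Nontrivial V] (htf : G.TransvectionFree) (hsq : ¬ G.HasSquare)
    (v : V) : G.IsMaxJoinSet (G.vstar v) := by
  refine ⟨isJoinSet_vstar (htf.neighborSet_nonempty v), fun T hT hvT => ?_⟩
  obtain ⟨w, -, hTw⟩ := hT.exists_subset_vstar hsq
  obtain rfl : v = w := htf.eq_of_neighborSet_subset_vstar fun u hu =>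
    hTw (hvT (Set.mem_insert_of_mem _ hu))
  exact hTw.antisymm hvT

lemma cliqueFactorIn_vstar (htf : G.TransvectionFree) (v : V) :
    G.cliqueFactorIn (G.vstar v) = {v} := by
  ext u
  constructor
  · rintro ⟨-, hu⟩
    refine (htf.eq_of_neighborSet_subset_vstar fun w hw => ?_).symm
    rcases eq_or_ne w u with rfl | hwu
    · exact Set.mem_insert _ _
    · exact Set.mem_insert_of_mem _ (hu w (Set.mem_insert_of_mem _ hw) hwu)
  · rintro rfl
    exact ⟨Set.mem_insert _ _, fun w hw hwv => hw.resolve_left hwv⟩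

lemma irreducibleSet_neighborSet (htf : G.TransvectionFree) (hsq : ¬ G.HasSquare) (v : V) :
    G.IrreducibleSet (G.neighborSet v) := fun hJ => by
  obtain ⟨w, hw, hvw⟩ := hJ.exists_subset_vstar hsq
  exact G.ne_of_adj hw (htf.eq_of_neighborSet_subset_vstar hvw)

end TransvectionFree

lemma IsMaxJoinSet.exists_eq_vstar (hsq : ¬ G.HasSquare) {S : Set V} (hS : G.IsMaxJoinSet S)
    (hstar : ∀ v, G.IsJoinSet (G.vstar v)) : ∃ v, S = G.vstar v := by
  obtain ⟨w, -, hSw⟩ := hS.1.exists_subset_vstar hsq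
  exact ⟨w, (hS.2 _ (hstar w) hSw).symm⟩

end SimpleGraph

open SimpleGraph in
theorem stmt_4 {V : Type*} [Fintype V] (G : SimpleGraph V)
    (htf : G.TransvectionFree) (hsq : ¬ G.HasSquare) (hcard : 2 ≤ Fintype.card V) :
    (∀ v : V,
        G.IsMaxJoinSet (G.vstar v) ∧
        G.cliqueFactorIn (G.vstar v) = {v} ∧
        G.IrreducibleSet (G.neighborSet v)) ∧
    (∀ S : Set V, G.IsMaxJoinSet S → ∃ v : V, S = G.vstar v) := by
  have : Nontrivial V := Fintype.one_lt_card_iff_nontrivial.1 hcard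
  refine ⟨fun v => ⟨htf.isMaxJoinSet_vstar hsq v, htf.cliqueFactorIn_vstar v,
    htf.irreducibleSet_neighborSet hsq v⟩, fun S hS => hS.exists_eq_vstar hsq ?_⟩
  exact fun v => isJoinSet_vstar (htf.neighborSet_nonempty v)
end

section
/- Let Λ be a finite simple graph and Δ ⊆ Λ a maximal join full subgraph, written Δ = C ∘ Δ₁ ∘ ⋯ ∘ Δₙ where C is the maximal clique factor of Δ and each Δᵢ is irreducible with at least two vertices. If C ≠ ∅ and Δ ≠ C, then C is an untransvectable clique of Λ: there is no vertex w ∉ C with C^⊥ ⊆ st(w). -/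
namespace SimpleGraph

variable {V : Type*} (G : SimpleGraph V) {S : Set V} {w : V}

theorem cliqueFactorIn_subset : G.cliqueFactorIn S ⊆ S := Set.sep_subset _ _

theorem mem_cliqueFactorIn_iff : w ∈ G.cliqueFactorIn S ↔ w ∈ S ∧ S ⊆ G.vstar w := by
  refine and_congr_right fun _ => forall₂_congr fun x _ => ?_
  rw [vstar, Set.mem_insert_iff, mem_neighborSet, ← or_iff_not_imp_left, eq_comm]

theorem sdiff_cliqueFactorIn_subset_perp (S : Set V) :
    S \ G.cliqueFactorIn S ⊆ G.perp (G.cliqueFactorIn S) := by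
  rintro a ⟨haS, haC⟩
  refine ⟨haC, fun u hu => (hu.2 a haS ?_).symm⟩
  rintro rfl
  exact haC hu

theorem mem_cliqueFactorIn_of_sdiff_subset_vstar (hwS : w ∈ S)
    (hw : S \ G.cliqueFactorIn S ⊆ G.vstar w) : w ∈ G.cliqueFactorIn S := by
  refine (G.mem_cliqueFactorIn_iff).2 ⟨hwS, fun x hxS => ?_⟩
  by_cases hxC : x ∈ G.cliqueFactorIn S
  · rw [mem_cliqueFactorIn_iff] at hxC
    rcases hxC.2 hwS with rfl | hxw
    · exact Set.mem_insert _ _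
    · exact Or.inr hxw.symm
  · exact hw ⟨hxS, hxC⟩

/-- Adding to `S` a vertex adjacent to all of `S \ C` gives the join of `S \ C` and `C ∪ {w}`. -/
theorem isJoinSet_insert (hS : (S \ G.cliqueFactorIn S).Nonempty)
    (hwS : w ∉ S \ G.cliqueFactorIn S) (hw : S \ G.cliqueFactorIn S ⊆ G.neighborSet w) :
    G.IsJoinSet (insert w S) := by
  refine ⟨S \ G.cliqueFactorIn S, insert w (G.cliqueFactorIn S), hS, Set.insert_nonempty _ _,
    ?_, ?_, ?_⟩
  · exact Set.disjoint_insert_right.2 ⟨hwS, Set.disjoint_sdiff_left⟩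
  · rw [Set.union_insert, Set.sdiff_union_of_subset G.cliqueFactorIn_subset]
  · rintro a ha b (rfl | hb)
    · exact (hw ha).symm
    · exact (G.sdiff_cliqueFactorIn_subset_perp S ha).2 b hb

end SimpleGraph

open SimpleGraph in
theorem stmt_5_general {V : Type*} (G : SimpleGraph V) (S : Set V)
    (hmax : G.IsMaxJoinSet S)
    (hSC : S ≠ G.cliqueFactorIn S) :
    ¬ ∃ w : V, w ∉ G.cliqueFactorIn S ∧ G.perp (G.cliqueFactorIn S) ⊆ G.vstar w := by
  rintro ⟨w, hwC, hperp⟩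
  have hw : S \ G.cliqueFactorIn S ⊆ G.vstar w :=
    (G.sdiff_cliqueFactorIn_subset_perp S).trans hperp
  by_cases hwS : w ∈ S
  · exact hwC (G.mem_cliqueFactorIn_of_sdiff_subset_vstar hwS hw)
  · have hS : (S \ G.cliqueFactorIn S).Nonempty :=
      Set.sdiff_nonempty.2 fun h => hSC (h.antisymm G.cliqueFactorIn_subset)
    have hjoin : G.IsJoinSet (insert w S) :=
      G.isJoinSet_insert hS (fun h => hwS h.1) fun x hx =>
        (hw hx).resolve_left fun hxw => hwS (hxw ▸ hx.1)
    exact hwS (hmax.2 _ hjoin (Set.subset_insert w S) ▸ Set.mem_insert w S)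

open SimpleGraph in
theorem stmt_5 {V : Type*} [Fintype V] (G : SimpleGraph V) (S : Set V)
    (hmax : G.IsMaxJoinSet S)
    (n : ℕ) (D : Fin n → Set V)
    (hunion : G.cliqueFactorIn S ∪ ⋃ i, D i = S)
    (hdisjC : ∀ i, Disjoint (G.cliqueFactorIn S) (D i))
    (hdisj : ∀ i j, i ≠ j → Disjoint (D i) (D j))
    (hcrossC : ∀ i, ∀ a ∈ G.cliqueFactorIn S, ∀ b ∈ D i, G.Adj a b)
    (hcross : ∀ i j, i ≠ j → ∀ a ∈ D i, ∀ b ∈ D j, G.Adj a b)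
    (hirr : ∀ i, G.IrreducibleSet (D i))
    (hcard : ∀ i, 2 ≤ (D i).ncard)
    (hCne : (G.cliqueFactorIn S).Nonempty)
    (hSC : S ≠ G.cliqueFactorIn S) :
    ¬ ∃ w : V, w ∉ G.cliqueFactorIn S ∧ G.perp (G.cliqueFactorIn S) ⊆ G.vstar w :=
  stmt_5_general G S hmax hSC
end

section
/- Let Λ be a finite simple graph and Δ = Δ₁ ∘ ⋯ ∘ Δₙ ⊆ Λ a maximal join full subgraph with empty maximal clique factor, where each Δᵢ is irreducible with at least two vertices. If D ⊆ Δ₁ is a complete subgraph that is untransvectable in Δ₁ (no vertex w of Δ₁ outside D satisfies D^⊥ ∩ Δ₁ ⊆ st_{Δ₁}(w)), then D is untransvectable in Λ: no vertex w of Λ outside D satisfies D^⊥ ⊆ st(w). -/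
/-
If `w ∉ D` had `D^⊥ ⊆ st(w)`, then `w` would be adjacent to every vertex of the other factors
`Δ₂, …, Δₙ`, all of which lie in `D^⊥`. Untransvectability inside `Δ₁` rules out `w ∈ Δ₁`. If `w`
lies in another factor `Δⱼ`, it is adjacent to every other vertex of `Δⱼ`, so `Δⱼ = {w} ∘ (Δⱼ ∖ w)`
is a join, contradicting irreducibility. If `w ∉ Δ`, then `(Δ ∖ Δ₁) ∘ (Δ₁ ∪ {w})` is a join
strictly containing `Δ`, contradicting maximality; here `Δ ∖ Δ₁ ≠ ∅` because `Δ` is a join while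
`Δ₁` is not.
-/

namespace SimpleGraph

variable {V : Type*} (G : SimpleGraph V)

lemma isJoinSet_union {A B : Set V} (hA : A.Nonempty) (hB : B.Nonempty) (hAB : Disjoint A B)
    (hadj : ∀ a ∈ A, ∀ b ∈ B, G.Adj a b) : G.IsJoinSet (A ∪ B) :=
  ⟨A, B, hA, hB, hAB, rfl, hadj⟩

variable {G}

lemma IrreducibleSet.exists_not_adj {T : Set V} (hT : G.IrreducibleSet T) (hcard : 2 ≤ T.ncard)
    {w : V} (hw : w ∈ T) : ∃ b ∈ T, b ≠ w ∧ ¬ G.Adj w b := by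
  by_contra! hadj
  have hrest : (T \ {w}).Nonempty := by
    apply Set.nonempty_of_ncard_ne_zero
    rw [Set.ncard_sdiff_singleton_of_mem hw]
    omega
  apply hT
  have hjoin := G.isJoinSet_union (Set.singleton_nonempty w) hrest Set.disjoint_sdiff_right
    (by rintro a rfl b ⟨hbT, hbw⟩; exact hadj b hbT hbw)
  rwa [Set.union_sdiff_self, Set.singleton_union, Set.insert_eq_of_mem hw] at hjoin

lemma IrreducibleSet.diff_nonempty {S T : Set V} (hT : G.IrreducibleSet T) (hS : G.IsJoinSet S)
    (hTS : T ⊆ S) : (S \ T).Nonempty := by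
  rw [Set.nonempty_iff_ne_empty, Ne, Set.sdiff_eq_empty]
  intro hST
  exact hT (hTS.antisymm hST ▸ hS)

lemma IsMaxJoinSet.exists_not_adj {S A : Set V} (hS : G.IsMaxJoinSet S) (hA : A ⊆ S)
    (hSA : (S \ A).Nonempty) (hcross : ∀ a ∈ S \ A, ∀ b ∈ A, G.Adj a b) {w : V} (hw : w ∉ S) :
    ∃ a ∈ S \ A, ¬ G.Adj a w := by
  by_contra! hadj
  have hdisj : Disjoint (S \ A) (insert w A) := by
    rw [Set.disjoint_insert_right]
    exact ⟨fun h => hw h.1, Set.disjoint_sdiff_left⟩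
  have hjoin := G.isJoinSet_union hSA (Set.insert_nonempty w A) hdisj
    (by rintro a ha b (rfl | hb); exacts [hadj a ha, hcross a ha b hb])
  rw [Set.union_insert, Set.sdiff_union_of_subset hA] at hjoin
  exact hw (hS.2 _ hjoin (Set.subset_insert w S) ▸ Set.mem_insert w S)

lemma adj_of_mem_diff_of_mem {ι : Type*} {P : ι → Set V} {S : Set V} (hunion : ⋃ i, P i = S)
    (hcross : ∀ i j, i ≠ j → ∀ a ∈ P i, ∀ b ∈ P j, G.Adj a b) {k : ι} {a b : V}
    (ha : a ∈ S \ P k) (hb : b ∈ P k) : G.Adj a b := by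
  obtain ⟨i, hai⟩ := Set.mem_iUnion.mp (hunion ▸ ha.1)
  exact hcross i k (by rintro rfl; exact ha.2 hai) a hai b hb

end SimpleGraph

open SimpleGraph in
theorem stmt_6_general {V : Type*} (G : SimpleGraph V) (S : Set V)
    (hmax : G.IsMaxJoinSet S)
    (n : ℕ) (hn : 0 < n) (P : Fin n → Set V)
    (hunion : ⋃ i, P i = S)
    (hdisj : ∀ i j, i ≠ j → Disjoint (P i) (P j))
    (hcross : ∀ i j, i ≠ j → ∀ a ∈ P i, ∀ b ∈ P j, G.Adj a b)
    (hirr : ∀ i, G.IrreducibleSet (P i))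
    (hcard : ∀ i, 2 ≤ (P i).ncard)
    (D : Set V) (hD : D ⊆ P ⟨0, hn⟩)
    (hunt : ¬ ∃ w ∈ P ⟨0, hn⟩, w ∉ D ∧
        G.perpIn (P ⟨0, hn⟩) D ⊆ {x ∈ P ⟨0, hn⟩ | x = w ∨ G.Adj w x}) :
    ¬ ∃ w : V, w ∉ D ∧ G.perp D ⊆ G.vstar w := by
  rintro ⟨w, hwD, hws⟩
  set P₀ := P ⟨0, hn⟩
  have hstar : ∀ a ∈ G.perp D, a ≠ w → G.Adj w a := fun a ha hne => (hws ha).resolve_left hne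
  have hP₀S : P₀ ⊆ S := hunion ▸ Set.subset_iUnion P _
  have hcross₀ : ∀ a ∈ S \ P₀, ∀ b ∈ P₀, G.Adj a b := fun a ha b hb =>
    adj_of_mem_diff_of_mem hunion hcross ha hb
  have hperp : ∀ a ∈ S \ P₀, a ∈ G.perp D := fun a ha =>
    ⟨fun haD => ha.2 (hD haD), fun u hu => hcross₀ a ha u (hD hu)⟩
  by_cases hw₀ : w ∈ P₀
  · exact hunt ⟨w, hw₀, hwD, fun x hx => ⟨hx.1, hws ⟨hx.2.1, hx.2.2⟩⟩⟩
  by_cases hwS : w ∈ S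
  · obtain ⟨j, hwj⟩ := Set.mem_iUnion.mp (hunion ▸ hwS)
    have hj : j ≠ ⟨0, hn⟩ := by rintro rfl; exact hw₀ hwj
    obtain ⟨b, hbj, hbw, hwb⟩ := (hirr j).exists_not_adj (hcard j) hwj
    have hb : b ∈ S \ P₀ :=
      ⟨hunion ▸ Set.mem_iUnion_of_mem j hbj, Set.disjoint_left.mp (hdisj j _ hj) hbj⟩
    exact hwb (hstar b (hperp b hb) hbw)
  · obtain ⟨a, ha, haw⟩ :=
      hmax.exists_not_adj hP₀S ((hirr _).diff_nonempty hmax.1 hP₀S) hcross₀ hwS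
    exact haw (hstar a (hperp a ha) (ne_of_mem_of_not_mem ha.1 hwS)).symm

open SimpleGraph in
theorem stmt_6 {V : Type*} [Fintype V] (G : SimpleGraph V) (S : Set V)
    (hmax : G.IsMaxJoinSet S) (hC : G.cliqueFactorIn S = ∅)
    (n : ℕ) (hn : 0 < n) (P : Fin n → Set V)
    (hunion : ⋃ i, P i = S)
    (hdisj : ∀ i j, i ≠ j → Disjoint (P i) (P j))
    (hcross : ∀ i j, i ≠ j → ∀ a ∈ P i, ∀ b ∈ P j, G.Adj a b)
    (hirr : ∀ i, G.IrreducibleSet (P i))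
    (hcard : ∀ i, 2 ≤ (P i).ncard)
    (D : Set V) (hD : D ⊆ P ⟨0, hn⟩) (hcomplete : D.Pairwise G.Adj)
    (hunt : ¬ ∃ w ∈ P ⟨0, hn⟩, w ∉ D ∧
        G.perpIn (P ⟨0, hn⟩) D ⊆ {x ∈ P ⟨0, hn⟩ | x = w ∨ G.Adj w x}) :
    ¬ ∃ w : V, w ∉ D ∧ G.perp D ⊆ G.vstar w :=
  stmt_6_general G S hmax n hn P hunion hdisj hcross hirr hcard D hD hunt
end

section
/- Every finite simple graph Γ with empty maximal clique factor decomposes as a join Γ = Γ₁ ∘ ⋯ ∘ Γₙ of irreducible full subgraphs each having at least two vertices, and this decomposition is unique up to permutation of the factors. -/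
open SimpleGraph in
/-- A join decomposition of the whole graph into irreducible full subgraphs with at least
two vertices each. -/
def SimpleGraph.IsIrredJoinDecomp {V : Type*} (G : SimpleGraph V)
    (n : ℕ) (P : Fin n → Set V) : Prop :=
  (∀ i j, i ≠ j → Disjoint (P i) (P j)) ∧
  (⋃ i, P i) = Set.univ ∧
  (∀ i j, i ≠ j → ∀ a ∈ P i, ∀ b ∈ P j, G.Adj a b) ∧
  (∀ i, G.IrreducibleSet (P i)) ∧
  (∀ i, 2 ≤ (P i).ncard)


namespace SimpleGraph

variable {V : Type*} {G : SimpleGraph V}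

structure IsIrredJoinDecompOn (G : SimpleGraph V) (S : Set V) {ι : Type*} (P : ι → Set V) :
    Prop where
  disjoint : ∀ i j, i ≠ j → Disjoint (P i) (P j)
  iUnion_eq : ⋃ i, P i = S
  adj : ∀ i j, i ≠ j → ∀ a ∈ P i, ∀ b ∈ P j, G.Adj a b
  irreducible : ∀ i, G.IrreducibleSet (P i)
  two_le_ncard : ∀ i, 2 ≤ (P i).ncard

theorem isIrredJoinDecomp_iff {n : ℕ} {P : Fin n → Set V} :
    G.IsIrredJoinDecomp n P ↔ G.IsIrredJoinDecompOn Set.univ P :=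
  ⟨fun ⟨h₁, h₂, h₃, h₄, h₅⟩ => ⟨h₁, h₂, h₃, h₄, h₅⟩,
    fun ⟨h₁, h₂, h₃, h₄, h₅⟩ => ⟨h₁, h₂, h₃, h₄, h₅⟩⟩

theorem cliqueFactorIn_singleton (v : V) : G.cliqueFactorIn {v} = {v} := by
  ext w
  simp +contextual [cliqueFactorIn]

theorem cliqueFactorIn_union_of_forall_adj {S₁ S₂ : Set V}
    (hadj : ∀ a ∈ S₁, ∀ b ∈ S₂, G.Adj a b) :
    G.cliqueFactorIn (S₁ ∪ S₂) = G.cliqueFactorIn S₁ ∪ G.cliqueFactorIn S₂ := by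
  ext v
  constructor
  · rintro ⟨hv | hv, hall⟩
    exacts [.inl ⟨hv, fun w hw => hall w (.inl hw)⟩, .inr ⟨hv, fun w hw => hall w (.inr hw)⟩]
  · rintro (⟨hv, hall⟩ | ⟨hv, hall⟩)
    · exact ⟨.inl hv, fun w hw => hw.elim (hall w) fun hw _ => hadj v hv w hw⟩
    · exact ⟨.inr hv, fun w hw => hw.elim (fun hw _ => (hadj w hw v hv).symm) (hall w)⟩

theorem two_le_ncard_of_cliqueFactorIn_eq_empty {S : Set V} (hS : S.Finite)
    (hne : S.Nonempty) (hcf : G.cliqueFactorIn S = ∅) : 2 ≤ S.ncard := by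
  have hpos : 0 < S.ncard := (Set.ncard_pos hS).mpr hne
  have hne_one : S.ncard ≠ 1 := by
    rintro h
    obtain ⟨v, rfl⟩ := Set.ncard_eq_one.mp h
    simp [cliqueFactorIn_singleton] at hcf
  omega

theorem IrreducibleSet.subset_of_mem {T : Set V} (hT : G.IrreducibleSet T) {ι : Type*}
    {Q : ι → Set V} (hcover : T ⊆ ⋃ j, Q j)
    (hadj : ∀ i j, i ≠ j → ∀ a ∈ Q i, ∀ b ∈ Q j, G.Adj a b)
    {v : V} {j : ι} (hvT : v ∈ T) (hvQ : v ∈ Q j) : T ⊆ Q j := by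
  intro b hbT
  by_contra hbQ
  refine hT ⟨T ∩ Q j, T \ Q j, ⟨v, hvT, hvQ⟩, ⟨b, hbT, hbQ⟩, Set.disjoint_sdiff_inter.symm,
    Set.inter_union_sdiff T (Q j), ?_⟩
  rintro a ⟨-, haQ⟩ c ⟨hcT, hcQ⟩
  obtain ⟨k, hck⟩ := Set.mem_iUnion.mp (hcover hcT)
  exact hadj j k (by rintro rfl; exact hcQ hck) a haQ c hck

namespace IsIrredJoinDecompOn

variable {S : Set V} {ι κ : Type*} {P : ι → Set V} {Q : κ → Set V}

theorem nonempty (hP : G.IsIrredJoinDecompOn S P) (i : ι) : (P i).Nonempty :=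
  Set.nonempty_of_ncard_ne_zero (by have := hP.two_le_ncard i; omega)

theorem comp_equiv (hP : G.IsIrredJoinDecompOn S P) (e : κ ≃ ι) :
    G.IsIrredJoinDecompOn S (P ∘ e) where
  disjoint _ _ hij := hP.disjoint _ _ (e.injective.ne hij)
  iUnion_eq := (e.surjective.iUnion_comp P).trans hP.iUnion_eq
  adj _ _ hij := hP.adj _ _ (e.injective.ne hij)
  irreducible _ := hP.irreducible _
  two_le_ncard _ := hP.two_le_ncard _

theorem empty : G.IsIrredJoinDecompOn ∅ (Fin.elim0 : Fin 0 → Set V) :=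
  ⟨fun i => i.elim0, by simp, fun i => i.elim0, fun i => i.elim0, fun i => i.elim0⟩

theorem single (hirr : G.IrreducibleSet S) (hS : 2 ≤ S.ncard) :
    G.IsIrredJoinDecompOn S (fun _ : Fin 1 => S) :=
  ⟨fun i j hij => (hij (Subsingleton.elim i j)).elim, Set.iUnion_const S,
    fun i j hij => (hij (Subsingleton.elim i j)).elim, fun _ => hirr, fun _ => hS⟩

theorem sumElim {S₁ S₂ : Set V} {P₁ : ι → Set V} {P₂ : κ → Set V}
    (h₁ : G.IsIrredJoinDecompOn S₁ P₁) (h₂ : G.IsIrredJoinDecompOn S₂ P₂)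
    (hadj : ∀ a ∈ S₁, ∀ b ∈ S₂, G.Adj a b) :
    G.IsIrredJoinDecompOn (S₁ ∪ S₂) (Sum.elim P₁ P₂) := by
  have hsub₁ (i : ι) : P₁ i ⊆ S₁ := h₁.iUnion_eq ▸ Set.subset_iUnion P₁ i
  have hsub₂ (i : κ) : P₂ i ⊆ S₂ := h₂.iUnion_eq ▸ Set.subset_iUnion P₂ i
  have hadj' (i : ι) (j : κ) : ∀ a ∈ P₁ i, ∀ b ∈ P₂ j, G.Adj a b :=
    fun a ha b hb => hadj a (hsub₁ i ha) b (hsub₂ j hb)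
  refine ⟨?_, ?_, ?_, ?_, ?_⟩
  · rintro (i | i) (j | j) hij
    · exact h₁.disjoint i j (by rintro rfl; exact hij rfl)
    · exact Set.disjoint_left.mpr fun a ha hb => G.irrefl (hadj' i j a ha a hb)
    · exact Set.disjoint_left.mpr fun a ha hb => G.irrefl (hadj' j i a hb a ha)
    · exact h₂.disjoint i j (by rintro rfl; exact hij rfl)
  · simp only [Set.iUnion_sum, Sum.elim_inl, Sum.elim_inr, h₁.iUnion_eq, h₂.iUnion_eq]
  · rintro (i | i) (j | j) hij a ha b hb
    · exact h₁.adj i j (by rintro rfl; exact hij rfl) a ha b hb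
    · exact hadj' i j a ha b hb
    · exact (hadj' j i b hb a ha).symm
    · exact h₂.adj i j (by rintro rfl; exact hij rfl) a ha b hb
  · rintro (i | i)
    exacts [h₁.irreducible i, h₂.irreducible i]
  · rintro (i | i)
    exacts [h₁.two_le_ncard i, h₂.two_le_ncard i]

theorem exists_subset (hP : G.IsIrredJoinDecompOn S P) (hQ : G.IsIrredJoinDecompOn S Q)
    (i : ι) : ∃ j, P i ⊆ Q j := by
  obtain ⟨v, hv⟩ := hP.nonempty i
  have hPS : P i ⊆ ⋃ j, Q j := hQ.iUnion_eq ▸ hP.iUnion_eq ▸ Set.subset_iUnion P i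
  obtain ⟨j, hvj⟩ := Set.mem_iUnion.mp (hPS hv)
  exact ⟨j, (hP.irreducible i).subset_of_mem hPS hQ.adj hv hvj⟩

theorem exists_equiv (hP : G.IsIrredJoinDecompOn S P) (hQ : G.IsIrredJoinDecompOn S Q) :
    ∃ σ : ι ≃ κ, ∀ i, Q (σ i) = P i := by
  choose f hf using hP.exists_subset hQ
  choose g hg using hQ.exists_subset hP
  have hgf (i : ι) : g (f i) = i := by
    by_contra h
    obtain ⟨v, hv⟩ := hP.nonempty i
    exact Set.disjoint_left.mp (hP.disjoint _ _ h) (hg (f i) (hf i hv)) hv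
  have hfg (j : κ) : f (g j) = j := by
    by_contra h
    obtain ⟨v, hv⟩ := hQ.nonempty j
    exact Set.disjoint_left.mp (hQ.disjoint _ _ h) (hf (g j) (hg j hv)) hv
  refine ⟨⟨f, g, hgf, hfg⟩, fun i => (hf i).antisymm' ?_⟩
  simpa only [hgf] using hg (f i)

end IsIrredJoinDecompOn

theorem exists_isIrredJoinDecompOn {S : Set V} (hS : S.Finite) (hcf : G.cliqueFactorIn S = ∅) :
    ∃ (n : ℕ) (P : Fin n → Set V), G.IsIrredJoinDecompOn S P := by
  rcases S.eq_empty_or_nonempty with rfl | hne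
  · exact ⟨0, _, .empty⟩
  by_cases hirr : G.IrreducibleSet S
  · exact ⟨1, _, .single hirr (two_le_ncard_of_cliqueFactorIn_eq_empty hS hne hcf)⟩
  obtain ⟨S₁, S₂, ⟨v₁, hv₁⟩, ⟨v₂, hv₂⟩, hd, rfl, hadj⟩ := not_not.mp hirr
  rw [cliqueFactorIn_union_of_forall_adj hadj, Set.union_empty_iff] at hcf
  have : S₁.ncard < (S₁ ∪ S₂).ncard :=
    Set.ncard_lt_ncard (Set.ssubset_iff_of_subset Set.subset_union_left |>.mpr
      ⟨v₂, Or.inr hv₂, hd.notMem_of_mem_right hv₂⟩) hS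
  have : S₂.ncard < (S₁ ∪ S₂).ncard :=
    Set.ncard_lt_ncard (Set.ssubset_iff_of_subset Set.subset_union_right |>.mpr
      ⟨v₁, Or.inl hv₁, hd.notMem_of_mem_left hv₁⟩) hS
  obtain ⟨n₁, P₁, hP₁⟩ := exists_isIrredJoinDecompOn (hS.subset Set.subset_union_left) hcf.1
  obtain ⟨n₂, P₂, hP₂⟩ := exists_isIrredJoinDecompOn (hS.subset Set.subset_union_right) hcf.2
  exact ⟨n₁ + n₂, _, (hP₁.sumElim hP₂ hadj).comp_equiv finSumFinEquiv.symm⟩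
termination_by S.ncard

end SimpleGraph

open SimpleGraph in
theorem stmt_10 {V : Type*} [Fintype V] (G : SimpleGraph V)
    (hmcf : G.cliqueFactorIn Set.univ = ∅) :
    (∃ (n : ℕ) (P : Fin n → Set V), G.IsIrredJoinDecomp n P) ∧
    (∀ (n : ℕ) (P : Fin n → Set V) (m : ℕ) (Q : Fin m → Set V),
        G.IsIrredJoinDecomp n P → G.IsIrredJoinDecomp m Q →
        ∃ σ : Fin n ≃ Fin m, ∀ i, Q (σ i) = P i) := by
  simp only [isIrredJoinDecomp_iff]
  exact ⟨exists_isIrredJoinDecompOn Set.finite_univ hmcf,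
    fun _ _ _ _ hP hQ => hP.exists_equiv hQ⟩
end

section
/- Let Γ be a finite simple graph and define v ≤ v' for vertices if lk(v) ⊆ st(v'), and v ∼ v' if v ≤ v' and v' ≤ v. Then ≤ is reflexive and transitive (a preorder), and each ∼-equivalence class [v] spans a full subgraph of Γ that is either complete or edgeless. -/
namespace SimpleGraph

variable {V : Type*} {G : SimpleGraph V} {a b c : V}

theorem dle_refl (G : SimpleGraph V) (v : V) : G.dle v v :=
  fun _ => Set.mem_insert_of_mem _

theorem dle.adj_of_adj (h : G.dle a b) (hac : G.Adj a c) (hcb : c ≠ b) : G.Adj b c :=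
  (h hac).resolve_left hcb

theorem dle.trans (hab : G.dle a b) (hbc : G.dle b c) : G.dle a c := by
  intro w haw
  rcases hab haw with rfl | hbw
  · by_cases hcw : c = w
    · exact hcw ▸ Set.mem_insert c _
    by_cases hac : a = c
    · exact hac ▸ Set.mem_insert_of_mem a haw
    -- `a ∈ lk(w) ⊆ st(c)` makes `c` a neighbour of `a`, hence of `w` since `a ≤ w`.
    have hca : G.Adj c a := hbc.adj_of_adj haw.symm hac
    exact Set.mem_insert_of_mem c (hab.adj_of_adj hca.symm hcw).symm
  · exact hbc hbw

theorem dle_of_mem_simClass {v : V} (ha : a ∈ G.simClass v) (hb : b ∈ G.simClass v) :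
    G.dle a b :=
  ha.2.trans hb.1

theorem pairwise_adj_of_dle_of_adj {S : Set V} (hS : ∀ x ∈ S, ∀ y ∈ S, G.dle x y)
    (ha : a ∈ S) (hb : b ∈ S) (hab : G.Adj a b) : S.Pairwise G.Adj := by
  -- A vertex of `S` with a neighbour in `S` is adjacent to every other vertex of `S`.
  have adj_of_adj : ∀ e ∈ S, ∀ d ∈ S, ∀ c, G.Adj e c → c ≠ d → G.Adj c d :=
    fun e he d hd _ hec hcd => ((hS e he d hd).adj_of_adj hec hcd).symm
  intro c hc d hd hcd
  by_cases hac : a = c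
  · exact adj_of_adj b hb d hd c (hac ▸ hab.symm) hcd
  · exact adj_of_adj a ha d hd c (adj_of_adj b hb c hc a hab.symm hac) hcd

theorem pairwise_adj_simClass_of_adj {v : V} (ha : a ∈ G.simClass v) (hb : b ∈ G.simClass v)
    (hab : G.Adj a b) : (G.simClass v).Pairwise G.Adj :=
  pairwise_adj_of_dle_of_adj (fun _ hx _ hy => dle_of_mem_simClass hx hy) ha hb hab

end SimpleGraph

open SimpleGraph in
theorem stmt_11_general {V : Type*} (G : SimpleGraph V) :
    Reflexive G.dle ∧ Transitive G.dle ∧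
    (∀ v : V, (G.simClass v).Pairwise G.Adj ∨
      ∀ a ∈ G.simClass v, ∀ b ∈ G.simClass v, ¬ G.Adj a b) := by
  refine ⟨G.dle_refl, fun _ _ _ => dle.trans, fun v => or_iff_not_imp_right.2 fun h => ?_⟩
  push Not at h
  obtain ⟨a, ha, b, hb, hab⟩ := h
  exact pairwise_adj_simClass_of_adj ha hb hab

open SimpleGraph in
theorem stmt_11 {V : Type*} [Fintype V] (G : SimpleGraph V) :
    Reflexive G.dle ∧ Transitive G.dle ∧
    (∀ v : V, (G.simClass v).Pairwise G.Adj ∨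
      ∀ a ∈ G.simClass v, ∀ b ∈ G.simClass v, ¬ G.Adj a b) :=
  stmt_11_general G
end

section
/- Let Γ be a finite simple graph of girth at least 5, let v₀,…,v_{n−1},v_n=v₀ be a cycle of minimal length in a connected component of Γ (so n ≥ 5, each vertex having degree at least 2 and Γ having no leaves in that component), and let W_Γ be the associated right-angled Coxeter group. Then W_{lk(v₀)} ∩ (W_{lk(v₁)} · W_{lk(v₂)} ⋯ W_{lk(v_{n−1})}) ⊆ W_{v₁} · W_{v_{n−1}}, where the middle term is the set of products g₁g₂⋯g_{n−1} with gᵢ ∈ W_{lk(vᵢ)}. -/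
/-!
Let `ρ` be the retraction of `W_Γ` onto `W_{lk(v₀)}` that kills every generator outside
`lk(v₀)`. It fixes `g` and maps each factor `gᵢ ∈ W_{lk(vᵢ)}` into `W_{lk(vᵢ) ∩ lk(v₀)}`, so
`g = ρ(g₁) ⋯ ρ(g_{n-1})`. The cycle has length `n ≥ girth ≥ 5`, and by minimality `v₀` and `vᵢ`
have a common neighbour only for `i = 2` (namely `v₁`) and `i = n - 2` (namely `v_{n-1}`): a
chord, or a common neighbour off the cycle, would close up a shorter cycle. Hence
`g = ρ(g₂) ρ(g_{n-2}) ∈ W_{v₁} W_{v_{n-1}}`.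
-/

namespace SimpleGraph

variable {V : Type*}

/-- The defining relations of the right-angled Coxeter group of a graph: each generator is
an involution, and generators corresponding to adjacent vertices commute. -/
def racgRels (G : SimpleGraph V) : Set (FreeGroup V) :=
  {r | (∃ v : V, r = FreeGroup.of v * FreeGroup.of v) ∨
       (∃ v w : V, G.Adj v w ∧
         r = FreeGroup.of v * FreeGroup.of w * (FreeGroup.of v)⁻¹ * (FreeGroup.of w)⁻¹)}

/-- The right-angled Coxeter group of a finite simple graph. -/
abbrev RACG (G : SimpleGraph V) : Type _ := PresentedGroup G.racgRels

/-- The image of a vertex in the right-angled Coxeter group. -/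
def racgGen (G : SimpleGraph V) (v : V) : G.RACG := PresentedGroup.of v

/-- The standard parabolic subgroup of the right-angled Coxeter group generated by the
vertices of a full subgraph. -/
def racgParabolic (G : SimpleGraph V) (A : Set V) : Subgroup G.RACG :=
  Subgroup.closure (G.racgGen '' A)

end SimpleGraph

namespace List

variable {M : Type*} [Monoid M] {f : ℕ → M}

lemma prod_map_range'_eq_single {s m a : ℕ} (hsa : s ≤ a) (ham : a < s + m)
    (hf : ∀ i, s ≤ i → i < s + m → i ≠ a → f i = 1) : ((range' s m).map f).prod = f a := by
  induction m generalizing s with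
  | zero => omega
  | succ m ih =>
    rw [range'_succ, map_cons, prod_cons]
    rcases eq_or_ne s a with rfl | hs
    · rw [prod_eq_one, mul_one]
      simp only [mem_map, mem_range'_1]
      rintro _ ⟨i, hi, rfl⟩
      exact hf i (by omega) (by omega) (by omega)
    · rw [hf s le_rfl (by omega) hs, one_mul]
      exact ih (by omega) (by omega) fun i hi hi' => hf i (by omega) (by omega)

lemma prod_map_range'_eq_mul {s m a b : ℕ} (hsa : s ≤ a) (hab : a < b) (hbm : b < s + m)
    (hf : ∀ i, s ≤ i → i < s + m → i ≠ a → i ≠ b → f i = 1) :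
    ((range' s m).map f).prod = f a * f b := by
  have hsplit := range'_append (s := s) (m := b - s) (n := s + m - b) (step := 1)
  rw [show s + 1 * (b - s) = b by omega, show b - s + (s + m - b) = m by omega] at hsplit
  rw [← hsplit, map_append, prod_append,
    prod_map_range'_eq_single hsa (by omega) fun i hi hi' hia => hf i hi (by omega) hia (by omega),
    prod_map_range'_eq_single (s := b) le_rfl (by omega)
      fun i hi hi' hib => hf i (by omega) (by omega) (by omega) hib]

end List

namespace SimpleGraph

variable {V : Type*}

section Coxeter

variable (G : SimpleGraph V)

lemma racgGen_mul_self (u : V) : G.racgGen u * G.racgGen u = 1 :=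
  (QuotientGroup.eq_one_iff _).2 <| Subgroup.subset_normalClosure <| Or.inl ⟨u, rfl⟩

lemma racgGen_commutator {u w : V} (h : G.Adj u w) :
    G.racgGen u * G.racgGen w * (G.racgGen u)⁻¹ * (G.racgGen w)⁻¹ = 1 :=
  (QuotientGroup.eq_one_iff _).2 <| Subgroup.subset_normalClosure <| Or.inr ⟨u, w, h, rfl⟩

@[simp]
lemma racgParabolic_empty : G.racgParabolic ∅ = ⊥ := by
  simp [racgParabolic]

open scoped Classical in
noncomputable def racgRetraction (S : Set V) : G.RACG →* G.RACG :=
  PresentedGroup.toGroup (f := fun w => if w ∈ S then G.racgGen w else 1) <| by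
    rintro r (⟨u, rfl⟩ | ⟨u, w, huw, rfl⟩)
    · by_cases hu : u ∈ S <;> simp [hu, racgGen_mul_self]
    · by_cases hu : u ∈ S <;> by_cases hw : w ∈ S <;> simp [hu, hw, racgGen_commutator G huw]

variable {G} {S : Set V}

lemma racgRetraction_racgGen_of_mem {w : V} (hw : w ∈ S) :
    G.racgRetraction S (G.racgGen w) = G.racgGen w := by
  simp [racgRetraction, racgGen, hw]

lemma racgRetraction_racgGen_of_notMem {w : V} (hw : w ∉ S) :
    G.racgRetraction S (G.racgGen w) = 1 := by
  simp [racgRetraction, racgGen, hw]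

lemma racgRetraction_eq_self {x : G.RACG} (hx : x ∈ G.racgParabolic S) :
    G.racgRetraction S x = x :=
  MonoidHom.eqOn_closure (f := G.racgRetraction S) (g := MonoidHom.id _)
    (by rintro _ ⟨w, hw, rfl⟩; exact racgRetraction_racgGen_of_mem hw) hx

lemma racgRetraction_mem_racgParabolic {A B : Set V} (hB : A ∩ S ⊆ B) {x : G.RACG}
    (hx : x ∈ G.racgParabolic A) : G.racgRetraction S x ∈ G.racgParabolic B := by
  suffices (G.racgParabolic A).map (G.racgRetraction S) ≤ G.racgParabolic B from
    this (Subgroup.mem_map_of_mem _ hx)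
  rw [racgParabolic, MonoidHom.map_closure, Subgroup.closure_le]
  rintro _ ⟨_, ⟨a, ha, rfl⟩, rfl⟩
  by_cases haS : a ∈ S
  · rw [racgRetraction_racgGen_of_mem haS]
    exact Subgroup.subset_closure ⟨a, hB ⟨ha, haS⟩, rfl⟩
  · rw [racgRetraction_racgGen_of_notMem haS]
    exact one_mem _

end Coxeter

section Cycles

variable {G : SimpleGraph V}

/-- `w 0, …, w (m - 1)` are the vertices of a cycle of `G` of length `m`, indices read mod `m`. -/
structure IsCycleSeq (G : SimpleGraph V) (m : ℕ) (w : ℕ → V) : Prop where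
  three_le : 3 ≤ m
  adj : ∀ i < m, G.Adj (w i) (w ((i + 1) % m))
  injOn : Set.InjOn w (Set.Iio m)

structure IsShortestCycleSeq (G : SimpleGraph V) (n : ℕ) (v : ℕ → V) : Prop
    extends G.IsCycleSeq n v where
  le_of_reachable : ∀ m w, G.IsCycleSeq m w → G.Reachable (w 0) (v 0) → n ≤ m

def walkOfSeq (p : ℕ → V) : (k : ℕ) → (∀ t < k, G.Adj (p t) (p (t + 1))) → G.Walk (p 0) (p k)
  | 0, _ => .nil
  | k + 1, hp =>
    (walkOfSeq p k fun t ht => hp t (Nat.lt_succ_of_lt ht)).concat (hp k k.lt_succ_self)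

lemma length_walkOfSeq (p : ℕ → V) (k : ℕ) (hp : ∀ t < k, G.Adj (p t) (p (t + 1))) :
    (walkOfSeq p k hp).length = k := by
  induction k with
  | zero => rfl
  | succ k ih => simp [walkOfSeq, ih]

lemma support_walkOfSeq (p : ℕ → V) (k : ℕ) (hp : ∀ t < k, G.Adj (p t) (p (t + 1))) :
    (walkOfSeq p k hp).support = (List.range (k + 1)).map p := by
  induction k with
  | zero => rfl
  | succ k ih => simp [walkOfSeq, ih, List.range_succ (n := k + 1)]

namespace IsCycleSeq

variable {m : ℕ} {w : ℕ → V}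

lemma adj_succ (hw : G.IsCycleSeq m w) {i : ℕ} (hi : i + 1 < m) : G.Adj (w i) (w (i + 1)) := by
  simpa [Nat.mod_eq_of_lt hi] using hw.adj i (by omega)

lemma adj_last (hw : G.IsCycleSeq m w) : G.Adj (w (m - 1)) (w 0) := by
  have := hw.three_le
  simpa [Nat.sub_add_cancel (by omega : 1 ≤ m)] using hw.adj (m - 1) (by omega)

lemma reachable (hw : G.IsCycleSeq m w) {i : ℕ} (hi : i < m) : G.Reachable (w 0) (w i) := by
  induction i with
  | zero => rfl
  | succ i ih => exact (ih (by omega)).trans (hw.adj_succ hi).reachable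

lemma girth_le (hw : G.IsCycleSeq m w) : G.girth ≤ m := by
  obtain ⟨k, rfl⟩ : ∃ k, m = k + 1 := ⟨m - 1, by have := hw.three_le; omega⟩
  let path := walkOfSeq w k fun t ht => hw.adj_succ (by omega)
  have hpath : path.IsPath := by
    rw [Walk.isPath_def, support_walkOfSeq]
    refine List.nodup_range.map_on fun s hs t ht => hw.injOn ?_ ?_ <;> simp_all
  have hcycle : (Walk.cons (by simpa using hw.adj_last) path).IsCycle := by
    refine (Walk.cons_isCycle_iff _ _).2 ⟨hpath, fun he => ?_⟩
    have := hpath.length_eq_one_of_mem_edges (Sym2.eq_swap ▸ he)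
    have := hw.three_le
    simp_all [path, length_walkOfSeq]
  simpa [path, length_walkOfSeq] using girth_le_length hcycle

lemma of_path {p : ℕ → V} {k : ℕ} (hk : 2 ≤ k) (hp : ∀ t < k, G.Adj (p t) (p (t + 1)))
    (hclose : G.Adj (p k) (p 0)) (hinj : Set.InjOn p (Set.Iic k)) : G.IsCycleSeq (k + 1) p where
  three_le := by omega
  adj i hi := by
    rcases Nat.lt_succ_iff_lt_or_eq.1 hi with hi | rfl
    · rw [Nat.mod_eq_of_lt (by omega)]
      exact hp i hi
    · rwa [Nat.mod_self]
  injOn s hs t ht := hinj (Nat.lt_succ_iff.1 hs) (Nat.lt_succ_iff.1 ht)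

lemma rotate (hw : G.IsCycleSeq m w) (r : ℕ) : G.IsCycleSeq m fun k => w ((k + r) % m) where
  three_le := hw.three_le
  adj i _ := by
    have hm : 0 < m := by have := hw.three_le; omega
    have := hw.adj ((i + r) % m) (Nat.mod_lt _ hm)
    rwa [Nat.mod_add_mod, Nat.add_right_comm, ← Nat.mod_add_mod (i + 1)] at this
  injOn s hs t ht hst := by
    have hm : 0 < m := by have := hw.three_le; omega
    have := hw.injOn (Nat.mod_lt _ hm) (Nat.mod_lt _ hm) hst
    exact Nat.ModEq.eq_of_lt_of_lt (Nat.ModEq.add_right_cancel' r this) hs ht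

end IsCycleSeq

namespace IsShortestCycleSeq

variable {n : ℕ} {v : ℕ → V}

lemma rotate (hv : G.IsShortestCycleSeq n v) (r : ℕ) :
    G.IsShortestCycleSeq n fun k => v ((k + r) % n) where
  toIsCycleSeq := hv.toIsCycleSeq.rotate r
  le_of_reachable m w hw hreach := by
    have hn : 0 < n := by have := hv.three_le; omega
    exact hv.le_of_reachable m w hw (hreach.trans (hv.reachable (Nat.mod_lt _ hn)).symm)

/-- A chord of a shortest cycle would cut off a shorter cycle. -/
lemma eq_succ_of_adj_of_lt (hv : G.IsShortestCycleSeq n v) {j k : ℕ} (hjk : j < k) (hk : k < n)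
    (h : G.Adj (v j) (v k)) : k = j + 1 ∨ (j = 0 ∧ k = n - 1) := by
  by_contra hne
  have hcycle : G.IsCycleSeq (k - j + 1) fun t => v (j + t) := by
    refine IsCycleSeq.of_path (by omega) (fun t ht => hv.adj_succ (by omega)) ?_ ?_
    · simpa [Nat.add_sub_cancel' hjk.le] using h.symm
    · intro s hs t ht hst
      have hs : s ≤ k - j := hs
      have ht : t ≤ k - j := ht
      have := hv.injOn (show j + s < n by omega) (show j + t < n by omega) hst
      omega
  have := hv.le_of_reachable _ _ hcycle (hv.reachable (by omega)).symm
  omega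

lemma eq_succ_or_of_adj (hv : G.IsShortestCycleSeq n v) {j k : ℕ} (hj : j < n) (hk : k < n)
    (h : G.Adj (v j) (v k)) :
    k = j + 1 ∨ j = k + 1 ∨ (j = 0 ∧ k = n - 1) ∨ (k = 0 ∧ j = n - 1) := by
  rcases lt_trichotomy j k with hjk | rfl | hkj
  · have := hv.eq_succ_of_adj_of_lt hjk hk h
    omega
  · exact absurd rfl h.ne
  · have := hv.eq_succ_of_adj_of_lt hkj hj h.symm
    omega

/-- A common neighbour `w` of `v 0` and `v i` off the cycle closes up the cycle
`v 0, …, v i, w`. -/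
lemma le_of_adj_of_adj (hv : G.IsShortestCycleSeq n v) {i : ℕ} {w : V} (hi : 1 ≤ i)
    (hin : i < n) (h0 : G.Adj (v 0) w) (hiw : G.Adj (v i) w) (hw : ∀ j < n, v j ≠ w) :
    n ≤ i + 2 := by
  let p : ℕ → V := fun t => if t ≤ i then v t else w
  have hcycle : G.IsCycleSeq (i + 1 + 1) p := by
    refine IsCycleSeq.of_path (by omega) (fun t ht => ?_) (by simpa [p] using h0.symm) ?_
    · rcases Nat.lt_succ_iff_lt_or_eq.1 ht with ht | rfl
      · simpa [p, ht.le, Nat.succ_le_of_lt ht] using hv.adj_succ (by omega)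
      · simpa [p] using hiw
    · intro s hs t ht hst
      simp only [Set.mem_Iic, p] at hs ht hst
      split_ifs at hst with hsi hti hti
      · exact hv.injOn (show s < n by omega) (show t < n by omega) hst
      · exact absurd hst (hw s (by omega))
      · exact absurd hst.symm (hw t (by omega))
      · omega
  exact hv.le_of_reachable _ p hcycle (by simp [p])

lemma eq_of_adj_of_adj (hv : G.IsShortestCycleSeq n v) (hn : 5 ≤ n) {i : ℕ} {w : V}
    (hi : 1 ≤ i) (hin : i < n) (h0 : G.Adj (v 0) w) (hiw : G.Adj (v i) w) :
    (i = 2 ∧ w = v 1) ∨ (i = n - 2 ∧ w = v (n - 1)) := by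
  by_cases hw : ∃ j < n, v j = w
  · obtain ⟨j, hj, rfl⟩ := hw
    have h0j := hv.eq_succ_or_of_adj (by omega) hj h0
    have hij := hv.eq_succ_or_of_adj hin hj hiw
    obtain ⟨rfl, rfl⟩ | ⟨rfl, rfl⟩ : (i = 2 ∧ j = 1) ∨ (i = n - 2 ∧ j = n - 1) := by omega
    exacts [.inl ⟨rfl, rfl⟩, .inr ⟨rfl, rfl⟩]
  · push Not at hw
    have := hv.le_of_adj_of_adj hi hin h0 hiw hw
    -- the same bound for the other arc `v i, …, v (n - 1), v 0`
    have := (hv.rotate i).le_of_adj_of_adj (i := n - i) (by omega) (by omega)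
      (by simpa [Nat.mod_eq_of_lt hin] using hiw) (by simpa [Nat.sub_add_cancel hin.le] using h0)
      (fun j hj => hw _ (Nat.mod_lt _ (by omega)))
    omega

end IsShortestCycleSeq

end Cycles

end SimpleGraph

open SimpleGraph in
theorem stmt_16_general {V : Type*} (G : SimpleGraph V)
    (hgirth : 5 ≤ G.girth)
    (n : ℕ) (v : ℕ → V) (hn : 3 ≤ n)
    (hadj : ∀ i < n, G.Adj (v i) (v ((i + 1) % n)))
    (hinj : ∀ i < n, ∀ j < n, v i = v j → i = j)
    (hmin : ∀ (m : ℕ) (w : ℕ → V), 3 ≤ m →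
        (∀ i < m, G.Adj (w i) (w ((i + 1) % m))) →
        (∀ i < m, ∀ j < m, w i = w j → i = j) →
        G.Reachable (w 0) (v 0) → n ≤ m)
    (g : G.RACG) (hg : g ∈ G.racgParabolic (G.neighborSet (v 0)))
    (h : ℕ → G.RACG)
    (hh : ∀ i, 1 ≤ i → i ≤ n - 1 → h i ∈ G.racgParabolic (G.neighborSet (v i)))
    (hprod : g = ((List.range' 1 (n - 1)).map h).prod) :
    ∃ x ∈ G.racgParabolic {v 1}, ∃ y ∈ G.racgParabolic {v (n - 1)}, g = x * y := by
  have hv : G.IsShortestCycleSeq n v :=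
    { three_le := hn, adj := hadj, injOn := fun i hi j hj => hinj i hi j hj
      le_of_reachable := fun m w hw => hmin m w hw.three_le hw.adj fun i hi j hj => hw.injOn hi hj }
  have hn5 : 5 ≤ n := hgirth.trans hv.girth_le
  set ρ := G.racgRetraction (G.neighborSet (v 0))
  have hρ : ∀ i (B : Set V), 1 ≤ i → i ≤ n - 1 →
      (∀ w, G.Adj (v 0) w → G.Adj (v i) w → w ∈ B) → ρ (h i) ∈ G.racgParabolic B :=
    fun i B hi hin hB =>
      racgRetraction_mem_racgParabolic (fun w ⟨hwi, hw0⟩ => hB w hw0 hwi) (hh i hi hin)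
  refine ⟨ρ (h 2), hρ 2 _ (by omega) (by omega) fun w h0 h2 => ?_,
    ρ (h (n - 2)), hρ (n - 2) _ (by omega) (by omega) fun w h0 hn2 => ?_, ?_⟩
  · rcases hv.eq_of_adj_of_adj hn5 (by omega) (by omega) h0 h2 with ⟨-, rfl⟩ | ⟨hi, -⟩
    exacts [rfl, by omega]
  · rcases hv.eq_of_adj_of_adj hn5 (by omega) (by omega) h0 hn2 with ⟨hi, -⟩ | ⟨-, rfl⟩
    exacts [by omega, rfl]
  rw [← racgRetraction_eq_self hg, hprod, map_list_prod, List.map_map]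
  refine List.prod_map_range'_eq_mul (by omega) (by omega) (by omega) fun i hi hin hi2 hin2 => ?_
  simpa using hρ i ∅ hi (by omega) fun w h0 hiw =>
    (hv.eq_of_adj_of_adj hn5 hi (by omega) h0 hiw).elim (hi2 ·.1) (hin2 ·.1)

open SimpleGraph in
theorem stmt_16 {V : Type*} [Fintype V] (G : SimpleGraph V) [DecidableRel G.Adj]
    (hdeg : ∀ u : V, 2 ≤ G.degree u) (hgirth : 5 ≤ G.girth)
    (n : ℕ) (v : ℕ → V) (hn : 3 ≤ n)
    (hadj : ∀ i < n, G.Adj (v i) (v ((i + 1) % n)))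
    (hinj : ∀ i < n, ∀ j < n, v i = v j → i = j)
    (hmin : ∀ (m : ℕ) (w : ℕ → V), 3 ≤ m →
        (∀ i < m, G.Adj (w i) (w ((i + 1) % m))) →
        (∀ i < m, ∀ j < m, w i = w j → i = j) →
        G.Reachable (w 0) (v 0) → n ≤ m)
    (g : G.RACG) (hg : g ∈ G.racgParabolic (G.neighborSet (v 0)))
    (h : ℕ → G.RACG)
    (hh : ∀ i, 1 ≤ i → i ≤ n - 1 → h i ∈ G.racgParabolic (G.neighborSet (v i)))
    (hprod : g = ((List.range' 1 (n - 1)).map h).prod) :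
    ∃ x ∈ G.racgParabolic {v 1}, ∃ y ∈ G.racgParabolic {v (n - 1)}, g = x * y :=
  stmt_16_general G hgirth n v hn hadj hinj hmin g hg h hh hprod
end

section
/- Let Γ be a finite simple graph which is transvection-free and contains no square, and suppose Σ ⊆ Γ is a maximal join full subgraph. Write Σ = C ∘ Σ₁ ∘ ⋯ ∘ Σₙ with C its maximal clique factor and each Σᵢ irreducible with at least two vertices. Then n ≤ 1; consequently, if Σ is a join of two nonempty subgraphs then C ≠ ∅. -/
/-!
Two irreducible factors on at least two vertices each contain a non-edge, and since every vertex
of one factor is adjacent to every vertex of the other, the two non-edges span an induced square.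
Hence there is at most one such factor, and if the clique factor were empty, `Σ` would be this
single irreducible factor (or empty), contradicting that `Σ` is a join.
-/

namespace SimpleGraph

variable {V : Type*}

variable {G : SimpleGraph V}

theorem IsJoinSet.nonempty {s : Set V} (h : G.IsJoinSet s) : s.Nonempty := by
  obtain ⟨s₁, _, hs₁, _, _, rfl, _⟩ := h
  exact hs₁.mono Set.subset_union_left

theorem isJoinSet_of_pairwise_adj {s : Set V} (hs : s.Nontrivial) (hadj : s.Pairwise G.Adj) :
    G.IsJoinSet s := by
  obtain ⟨x, hx, y, hy, hxy⟩ := hs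
  refine ⟨{x}, s \ {x}, Set.singleton_nonempty x, ⟨y, hy, hxy.symm⟩,
    Set.disjoint_sdiff_right, Set.union_sdiff_cancel (Set.singleton_subset_iff.2 hx), ?_⟩
  rintro a rfl b ⟨hb, hbx⟩
  exact hadj hx hb (Ne.symm hbx)

theorem IrreducibleSet.not_pairwise_adj {s : Set V} (hirr : G.IrreducibleSet s)
    (hcard : 2 ≤ s.ncard) : ¬ s.Pairwise G.Adj :=
  fun hadj ↦ hirr <| isJoinSet_of_pairwise_adj
    (Set.one_lt_ncard_iff_nontrivial_and_finite.1 hcard).1 hadj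

theorem hasSquare_of_forall_adj {A B : Set V} (hAB : ∀ a ∈ A, ∀ b ∈ B, G.Adj a b)
    (hA : ¬ A.Pairwise G.Adj) (hB : ¬ B.Pairwise G.Adj) : G.HasSquare := by
  obtain ⟨a, ha, a', ha', haa', hnaa'⟩ : ∃ a ∈ A, ∃ a' ∈ A, a ≠ a' ∧ ¬ G.Adj a a' := by
    simpa [Set.Pairwise] using hA
  obtain ⟨b, hb, b', hb', hbb', hnbb'⟩ : ∃ b ∈ B, ∃ b' ∈ B, b ≠ b' ∧ ¬ G.Adj b b' := by
    simpa [Set.Pairwise] using hB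
  exact ⟨a, b, a', b', haa', hbb', hAB a ha b hb, (hAB a' ha' b hb).symm, hAB a' ha' b' hb',
    (hAB a ha b' hb').symm, hnaa', hnbb'⟩

end SimpleGraph

open SimpleGraph in
theorem stmt_18_general {V : Type*} (G : SimpleGraph V)
    (hsq : ¬ G.HasSquare)
    (S : Set V) (hmax : G.IsMaxJoinSet S)
    (n : ℕ) (D : Fin n → Set V)
    (hunion : G.cliqueFactorIn S ∪ ⋃ i, D i = S)
    (hcross : ∀ i j, i ≠ j → ∀ a ∈ D i, ∀ b ∈ D j, G.Adj a b)
    (hirr : ∀ i, G.IrreducibleSet (D i))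
    (hcard : ∀ i, 2 ≤ (D i).ncard) :
    n ≤ 1 ∧ (G.cliqueFactorIn S).Nonempty := by
  have hn : n ≤ 1 := by
    by_contra! hn
    have h01 : (⟨0, by omega⟩ : Fin n) ≠ ⟨1, hn⟩ := by simp [Fin.ext_iff]
    exact hsq <| hasSquare_of_forall_adj (hcross _ _ h01)
      ((hirr _).not_pairwise_adj (hcard _)) ((hirr _).not_pairwise_adj (hcard _))
  refine ⟨hn, Set.nonempty_iff_ne_empty.2 fun hC ↦ ?_⟩
  rw [hC, Set.empty_union] at hunion
  interval_cases n
  · rw [← hunion, Set.iUnion_of_empty] at hmax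
    exact Set.not_nonempty_empty hmax.1.nonempty
  · rw [← hunion, show ⋃ i, D i = D 0 from iSup_unique D] at hmax
    exact hirr 0 hmax.1

open SimpleGraph in
theorem stmt_18 {V : Type*} [Fintype V] (G : SimpleGraph V)
    (htf : G.TransvectionFree) (hsq : ¬ G.HasSquare)
    (S : Set V) (hmax : G.IsMaxJoinSet S)
    (n : ℕ) (D : Fin n → Set V)
    (hunion : G.cliqueFactorIn S ∪ ⋃ i, D i = S)
    (hdisjC : ∀ i, Disjoint (G.cliqueFactorIn S) (D i))
    (hdisj : ∀ i j, i ≠ j → Disjoint (D i) (D j))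
    (hcrossC : ∀ i, ∀ a ∈ G.cliqueFactorIn S, ∀ b ∈ D i, G.Adj a b)
    (hcross : ∀ i j, i ≠ j → ∀ a ∈ D i, ∀ b ∈ D j, G.Adj a b)
    (hirr : ∀ i, G.IrreducibleSet (D i))
    (hcard : ∀ i, 2 ≤ (D i).ncard) :
    n ≤ 1 ∧ (G.cliqueFactorIn S).Nonempty :=
  stmt_18_general G hsq S hmax n D hunion hcross hirr hcard
end
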